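/- arXiv:1604.02317 — 6 statements merged into one kernel-verified Lean document; each statement's English description precedes it below -/
import Mathlib

section
/- Let w>0, let L be a linkage in a digraph G, and let Q_1,…,Q_c each be a subpath of some member of L. Let X_1,Y_1,X_2,Y_2,…,X_c,Y_c be pairwise disjoint subsets of V(L) such that the (X_i,Y_i)-wiggle number of Q_i is at least cw for 1≤i≤c. Then for 1≤i≤c there is a subpath R_i of Q_i such that the (X_i,Y_i)-wiggle number of R_i is at least w, and the paths R_1,…,R_c are pairwise vertex-disjoint. -/
open scoped Classical

noncomputable section

/-- A digraph: loopless, no parallel edges (an adjacency relation);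
for distinct `u v` both `adj u v` and `adj v u` may hold. -/
structure Dgraph (V : Type) where
  adj : V → V → Prop
  irrefl : ∀ v, ¬ adj v v

/-- A directed path in a digraph `G`, given by its (nonempty, duplicate-free) list of
vertices, consecutive vertices being adjacent. -/
structure Dpath {V : Type} (G : Dgraph V) where
  verts : List V
  ne : verts ≠ []
  nodup : verts.Nodup
  chain : verts.Chain' G.adj

namespace Dpath

variable {V : Type} {G : Dgraph V}

/-- `s(P)`, the first vertex of a path. -/
def first (P : Dpath G) : V := P.verts.head P.ne

/-- `t(P)`, the last vertex of a path. -/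
def last (P : Dpath G) : V := P.verts.getLast P.ne

/-- `V(P)`, the set of vertices of a path. -/
def support (P : Dpath G) : Set V := {v | v ∈ P.verts}

/-- The length of a path: its number of edges. -/
def length (P : Dpath G) : ℕ := P.verts.length - 1

/-- `Q` is a subpath of `P`. -/
def IsSubpath (Q P : Dpath G) : Prop := Q.verts <:+: P.verts

/-- `Q` is an initial subpath of `P` (a subpath with `s(Q) = s(P)`). -/
def IsInitialSubpath (Q P : Dpath G) : Prop := Q.verts <+: P.verts

/-- The (directed) edges of a path, as ordered pairs of consecutive vertices. -/
def edges (P : Dpath G) : List (V × V) := P.verts.zip P.verts.tail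

end Dpath

variable {V : Type}

/-- A family of paths is a linkage when its members are pairwise vertex-disjoint. -/
def IsLinkage {G : Dgraph V} {k : ℕ} (L : Fin k → Dpath G) : Prop :=
  ∀ i j, i ≠ j → Disjoint (L i).support (L j).support

/-- `V(L)`, the union of the vertex sets of the members of a linkage. -/
def linkSupport {G : Dgraph V} {k : ℕ} (L : Fin k → Dpath G) : Set V :=
  ⋃ i, (L i).support

/-- `(G, s 1, t 1, …, s k, t k)` is a problem instance: the `2k` vertices are distinct. -/
def IsInstance {k : ℕ} (sv tv : Fin k → V) : Prop :=
  Function.Injective sv ∧ Function.Injective tv ∧ ∀ i j, sv i ≠ tv j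

/-- `L` is a linkage for the problem instance: its `i`-th member runs from `s i` to `t i`. -/
def IsLinkageFor {G : Dgraph V} {k : ℕ} (L : Fin k → Dpath G) (sv tv : Fin k → V) : Prop :=
  IsLinkage L ∧ ∀ i, (L i).first = sv i ∧ (L i).last = tv i

/-- A linkage is minimum if no linkage joining the same pairs of ends uses fewer vertices. -/
def IsMinimumLinkage {G : Dgraph V} {k : ℕ} (L : Fin k → Dpath G) : Prop :=
  IsLinkage L ∧ ∀ L' : Fin k → Dpath G, IsLinkage L' →
    (∀ i, (L' i).first = (L i).first ∧ (L' i).last = (L i).last) →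
    (linkSupport L).ncard ≤ (linkSupport L').ncard

/-- A minimum linkage for a problem instance. -/
def IsMinimumLinkageFor {G : Dgraph V} {k : ℕ} (L : Fin k → Dpath G)
    (sv tv : Fin k → V) : Prop :=
  IsLinkageFor L sv tv ∧ IsMinimumLinkage L

/-- `C ⊆ V(G)` is a clique if `G[C]` is semicomplete. -/
def Dgraph.IsClique (G : Dgraph V) (C : Set V) : Prop :=
  ∀ u ∈ C, ∀ v ∈ C, u ≠ v → (G.adj u v ∨ G.adj v u)

/-- `(C 1, …, C c)` is a clique-partition of `G`: a partition of `V(G)` into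
(possibly empty) cliques. -/
def Dgraph.IsCliquePartition (G : Dgraph V) {c : ℕ} (C : Fin c → Set V) : Prop :=
  (∀ a, G.IsClique (C a)) ∧ ∀ v : V, ∃! a, v ∈ C a

/-- The internal vertices of a linkage: vertices of `V(L)` not an end of any member. -/
def internalVerts {G : Dgraph V} {k : ℕ} (L : Fin k → Dpath G) : Set V :=
  linkSupport L \ ((Set.range fun i => (L i).first) ∪ (Set.range fun i => (L i).last))

/-- `M` is internally disjoint from `L`: no internal vertex of `M` belongs to `V(L)`. -/
def InternallyDisjointFrom {G : Dgraph V} {m k : ℕ} (M : Fin m → Dpath G)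
    (L : Fin k → Dpath G) : Prop :=
  ∀ v ∈ internalVerts M, v ∉ linkSupport L

/-- A planar `(Q,R)`-matching of cardinality `n`: a linkage of `n` paths, each with at most
three vertices, whose first vertices lie on `Q` in order and last vertices lie on `R` in
order. -/
def IsPlanarMatching {G : Dgraph V} {n : ℕ} (Q R : Dpath G) (M : Fin n → Dpath G) : Prop :=
  IsLinkage M ∧ (∀ j, (M j).verts.length ≤ 3) ∧
  (List.ofFn fun j => (M j).first).Sublist Q.verts ∧
  (List.ofFn fun j => (M j).last).Sublist R.verts

/-- A planar `(Q,R)`-matching from `X` to `Y`. -/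
def IsPlanarMatchingFromTo {G : Dgraph V} {n : ℕ} (Q R : Dpath G) (M : Fin n → Dpath G)
    (X Y : Set V) : Prop :=
  IsPlanarMatching Q R M ∧ ∀ j, (M j).first ∈ X ∧ (M j).last ∈ Y

/-- `B ⊆ C` is `C`-acceptable for the linkage `L` (for the instance given by `sv, tv`). -/
def CAcceptable {G : Dgraph V} {k : ℕ} (sv tv : Fin k → V) (L : Fin k → Dpath G)
    (C B : Set V) : Prop :=
  B ⊆ C ∧
  Set.range sv ∩ C ⊆ B ∧
  Set.range tv ∩ B = ∅ ∧
  (∀ i, ∃ Q : Dpath G, Q.IsInitialSubpath (L i) ∧ Q.support ∩ C = (L i).support ∩ B) ∧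
  ∀ i j : Fin k, ¬ ∃ M : Fin (k ^ 2 + k + 2) → Dpath G,
      IsPlanarMatchingFromTo (L i) (L j) M B (C \ B) ∧ InternallyDisjointFrom M L

/-- A list of vertices is `(X,Y)`-alternating: entries with even position (0-based) are
in `X`, those with odd position in `Y`. -/
def Alternating (X Y : Set V) (l : List V) : Prop :=
  ∀ (i : ℕ) (h : i < l.length),
    if i % 2 = 0 then l.get ⟨i, h⟩ ∈ X else l.get ⟨i, h⟩ ∈ Y

/-- `P` contains an `(X,Y)`-alternating sequence (of distinct vertices, in order in `P`)
of length `2 * m`. -/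
def HasAlt {G : Dgraph V} (P : Dpath G) (X Y : Set V) (m : ℕ) : Prop :=
  ∃ l : List V, l.Sublist P.verts ∧ l.length = 2 * m ∧ Alternating X Y l

/-- The `(X,Y)`-wiggle number of `P`: half the length of the longest `(X,Y)`-alternating
sequence of vertices in order in `P`. -/
def wiggle {G : Dgraph V} (P : Dpath G) (X Y : Set V) : ℕ :=
  sSup {m | HasAlt P X Y m}

/-- `zOf k c = c(c(k²+k+1)+k+2)`. -/
def zOf (k c : ℕ) : ℕ := c * (c * (k ^ 2 + k + 1) + k + 2)

/-- `wOf k c = c(c−1)(z+1)+1`. -/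
def wOf (k c : ℕ) : ℕ := c * (c - 1) * (zOf k c + 1) + 1

/-- `rOf k c = ckw`. -/
def rOf (k c : ℕ) : ℕ := c * k * wOf k c

/-- `sOf k = k²+k+3`. -/
def sOf (k : ℕ) : ℕ := k ^ 2 + k + 3

/-- `tOf k c = 2cskw + c(2w+1)k²(k²+k+1)`. -/
def tOf (k c : ℕ) : ℕ :=
  2 * c * sOf k * k * wOf k c + c * (2 * wOf k c + 1) * k ^ 2 * (k ^ 2 + k + 1)

/-- Given a clique-partition `C` and a linkage `L` for the instance, `B` is acceptable
(with `A = V(G) ∖ B`). -/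
def Acceptable {G : Dgraph V} {k c : ℕ} (sv tv : Fin k → V) (L : Fin k → Dpath G)
    (C : Fin c → Set V) (z : ℕ) (B : Set V) : Prop :=
  (∀ i, sv i ∈ B) ∧ (∀ i, tv i ∉ B) ∧
  (∀ a, CAcceptable sv tv L (C a) (B ∩ C a)) ∧
  ∀ a b, a ≠ b → ∀ i, wiggle (L i) (B ∩ C b) (Bᶜ ∩ C a) ≤ z

/-- The vertices of `l` belonging to `C`, in order. -/
def inOrderIn (l : List V) (C : Set V) : List V := l.filter fun v => decide (v ∈ C)

/-- The last `m` (or "up to `m`") vertices of the path `P` in `C`, in order along `P`. -/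
def lastIn {G : Dgraph V} (P : Dpath G) (C : Set V) (m : ℕ) : List V :=
  (inOrderIn P.verts C).drop ((inOrderIn P.verts C).length - m)

/-- The first up-to-`m` vertices of the path `P` in `C`, in order along `P`. -/
def firstUpTo {G : Dgraph V} (P : Dpath G) (C : Set V) (m : ℕ) : List V :=
  (inOrderIn P.verts C).take m

/-- The set of terms of a vertex sequence. -/
def seqSet (X : List V) : Set V := {v | v ∈ X}

/-- `𝒜⁺` for a set `𝒜` of vertex sequences. -/
def plusSet (G : Dgraph V) {c : ℕ} (C : Fin c → Set V) (s : ℕ) (𝒜 : Set (List V)) : Set V :=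
  {v | ∃ X ∈ 𝒜, ∃ a, insert v (seqSet X) ⊆ C a ∧
    (v ∈ X ∨ (v ∉ X ∧ X.length = s ∧ ∀ u ∈ X.drop (X.length - (s - 1)), G.adj u v))}

/-- `𝒜⁻` for a set `𝒜` of vertex sequences. -/
def minusSet (G : Dgraph V) {c : ℕ} (C : Fin c → Set V) (s : ℕ) (𝒜 : Set (List V)) : Set V :=
  {v | ∃ X ∈ 𝒜, ∃ a, insert v (seqSet X) ⊆ C a ∧
    (v ∈ X ∨ (v ∉ X ∧ X.length = s ∧ ∀ u ∈ X.take (s - 1), G.adj v u))}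

/-- A set `D ⊆ V(G)` is `(r,s,t)`-restricted. -/
def Restricted (G : Dgraph V) {c : ℕ} (C : Fin c → Set V) (r s t : ℕ) (D : Set V) : Prop :=
  ∃ 𝒜 ℬ : Set (List V),
    (∀ X ∈ 𝒜, X.length ≤ s) ∧ (∀ X ∈ ℬ, X.length ≤ s) ∧
    𝒜.ncard ≤ r ∧ ℬ.ncard ≤ r ∧
    (plusSet G C s ℬ ∩ minusSet G C s 𝒜).ncard ≤ t ∧
    plusSet G C s ℬ \ minusSet G C s 𝒜 ⊆ D ∧
    D ⊆ plusSet G C s ℬ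

/-- `e` is an enumeration of `V(L) ∖ {s 1,…,s k,t 1,…,t k}`. -/
def IsEnumeration {G : Dgraph V} {k : ℕ} (L : Fin k → Dpath G) (sv tv : Fin k → V)
    (e : List V) : Prop :=
  e.Nodup ∧ {v | v ∈ e} = linkSupport L \ (Set.range sv ∪ Set.range tv)

/-- `B h = {s 1,…,s k} ∪ {v 1,…,v h}`, for the enumeration `e`. -/
def BsetOf {k : ℕ} (sv : Fin k → V) (e : List V) (h : ℕ) : Set V :=
  Set.range sv ∪ {v | v ∈ e.take h}

/-- `A h = V(L) ∖ B h`. -/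
def AsetOf {G : Dgraph V} {k : ℕ} (L : Fin k → Dpath G) (sv : Fin k → V) (e : List V)
    (h : ℕ) : Set V :=
  linkSupport L \ BsetOf sv e h

/-- The maximal subpaths of members of `L` with all vertices in `S`: the components,
included in `S`, of the digraph obtained from `P 1 ∪ ⋯ ∪ P k` by deleting the edges with
exactly one end in `S`. -/
def segsIn {G : Dgraph V} {k : ℕ} (L : Fin k → Dpath G) (S : Set V) : Set (Dpath G) :=
  {Q | ∃ i, Q.IsSubpath (L i) ∧ Q.support ⊆ S ∧
    ∀ Q' : Dpath G, Q'.IsSubpath (L i) → Q'.support ⊆ S → Q.IsSubpath Q' →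
      Q'.verts = Q.verts}

/-- `𝒜 h`: first up-to-`s` vertices in each `C a` of each path of `ℛ h`. -/
def AseqsOf (G : Dgraph V) {k c : ℕ} (C : Fin c → Set V) (s : ℕ) (L : Fin k → Dpath G)
    (sv : Fin k → V) (e : List V) (h : ℕ) : Set (List V) :=
  {X | ∃ R ∈ segsIn L (AsetOf L sv e h), ∃ a, X = firstUpTo R (C a) s}

/-- `ℬ h`: last up-to-`s` vertices in each `C a` of each path of `𝒬 h`. -/
def BseqsOf (G : Dgraph V) {k c : ℕ} (C : Fin c → Set V) (s : ℕ) (L : Fin k → Dpath G)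
    (sv : Fin k → V) (e : List V) (h : ℕ) : Set (List V) :=
  {X | ∃ Q ∈ segsIn L (BsetOf sv e h), ∃ a, X = lastIn Q (C a) s}

/-- `D h = (ℬ h⁺ ∖ 𝒜 h⁻) ∪ B h`. -/
def DsetOf (G : Dgraph V) {k c : ℕ} (C : Fin c → Set V) (s : ℕ) (L : Fin k → Dpath G)
    (sv : Fin k → V) (e : List V) (h : ℕ) : Set V :=
  (plusSet G C s (BseqsOf G C s L sv e h) \ minusSet G C s (AseqsOf G C s L sv e h))
    ∪ BsetOf sv e h

/-- The edges of the members of a linkage. -/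
def linkEdges {G : Dgraph V} {k : ℕ} (L : Fin k → Dpath G) : Set (V × V) :=
  ⋃ i, {p | p ∈ (L i).edges}

/-- `J h`: the edges of `P 1 ∪ ⋯ ∪ P k` with one end in `A h` and the other in `B h`. -/
def JsetOf {G : Dgraph V} {k : ℕ} (L : Fin k → Dpath G) (sv : Fin k → V) (e : List V)
    (h : ℕ) : Set (V × V) :=
  {p ∈ linkEdges L |
    (p.1 ∈ AsetOf L sv e h ∧ p.2 ∈ BsetOf sv e h) ∨
    (p.1 ∈ BsetOf sv e h ∧ p.2 ∈ AsetOf L sv e h)}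

/-- `Y h = {(e,i) : e ∈ J h ∩ E(P i)}`, as a set of coloured edges. -/
def YsetOf {G : Dgraph V} {k : ℕ} (L : Fin k → Dpath G) (sv : Fin k → V) (e : List V)
    (h : ℕ) : Set ((V × V) × Fin k) :=
  {p | p.1 ∈ JsetOf L sv e h ∧ p.1 ∈ (L p.2).edges}

/-- `ℰ`: the admissible sets of coloured edges (a coloured edge is a pair `(e,i)` with
`e ∈ E(G)` and `i` a colour in `Fin k`; its tail is `e.1` and its head is `e.2`). -/
def EdgeSets (G : Dgraph V) {k : ℕ} (sv tv : Fin k → V) (w : ℕ) :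
    Set (Set ((V × V) × Fin k)) :=
  {Y | (∀ p ∈ Y, G.adj p.1.1 p.1.2) ∧
    Y.ncard ≤ 2 * w - 1 ∧
    (∀ p ∈ Y, ∀ q ∈ Y, p ≠ q → p.1.2 ≠ q.1.2 ∧ p.1.1 ≠ q.1.1) ∧
    (∀ p ∈ Y, ∀ q ∈ Y, ({p.1.1, p.1.2} ∩ {q.1.1, q.1.2} : Set V).Nonempty → p.2 = q.2) ∧
    (∀ p ∈ Y, p.1.2 ∉ Set.range sv ∧ p.1.1 ∉ Set.range tv) ∧
    (∀ p ∈ Y, ∀ i, (p.1.1 = sv i → p.2 = i) ∧ (p.1.2 = tv i → p.2 = i))}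

/-- The vertices of the auxiliary digraph `H`: pairs `(Y,D)` with `Y ∈ ℰ`, `D ∈ 𝒟`
(i.e. `D` is `(r,s,t)`-restricted), such that every coloured edge of `Y` has exactly one
end in `D`. -/
def HVert (G : Dgraph V) {k c : ℕ} (sv tv : Fin k → V) (C : Fin c → Set V)
    (w r s t : ℕ) (x : Set ((V × V) × Fin k) × Set V) : Prop :=
  x.1 ∈ EdgeSets G sv tv w ∧ Restricted G C r s t x.2 ∧
  ∀ p ∈ x.1, Xor' (p.1.1 ∈ x.2) (p.1.2 ∈ x.2)

/-- Adjacency in the auxiliary digraph `H`. -/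
def HAdj (G : Dgraph V) {k c : ℕ} (sv tv : Fin k → V) (C : Fin c → Set V)
    (w r s t : ℕ) (x y : Set ((V × V) × Fin k) × Set V) : Prop :=
  x ≠ y ∧ HVert G sv tv C w r s t x ∧ HVert G sv tv C w r s t y ∧ x.2 ⊆ y.2 ∧
  ∃ p q : (V × V) × Fin k, p ≠ q ∧ symmDiff x.1 y.1 = {p, q} ∧
    p.1.2 = q.1.1 ∧ p.1.1 ≠ q.1.2 ∧ p.1.2 ∈ y.2 \ x.2

/-- The auxiliary digraph `H`. -/
def auxH (G : Dgraph V) {k c : ℕ} (sv tv : Fin k → V) (C : Fin c → Set V)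
    (w r s t : ℕ) : Dgraph (Set ((V × V) × Fin k) × Set V) :=
  ⟨HAdj G sv tv C w r s t, fun _ hx => hx.1 rfl⟩

/-- `S 0`: the vertices `(Y,D)` of `H` with `|Y| = k` and every member of `Y` having tail
in `{s 1,…,s k}`. -/
def S0set (G : Dgraph V) {k c : ℕ} (sv tv : Fin k → V) (C : Fin c → Set V)
    (w r s t : ℕ) : Set (Set ((V × V) × Fin k) × Set V) :=
  {x | HVert G sv tv C w r s t x ∧ x.1.ncard = k ∧ ∀ p ∈ x.1, p.1.1 ∈ Set.range sv}

/-- `T 0`: the vertices `(Y,D)` of `H` with `|Y| = k` and every member of `Y` having head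
in `{t 1,…,t k}`. -/
def T0set (G : Dgraph V) {k c : ℕ} (sv tv : Fin k → V) (C : Fin c → Set V)
    (w r s t : ℕ) : Set (Set ((V × V) × Fin k) × Set V) :=
  {x | HVert G sv tv C w r s t x ∧ x.1.ncard = k ∧ ∀ p ∈ x.1, p.1.2 ∈ Set.range tv}

end

/-!
Split an alternating sequence of length `2cw` in `Q i` into `c` runs of `2w` consecutive terms:
the segments of `Q i` spanned by the runs are `c` consecutive blocks, each of wiggle number at
least `w`. Laying the members of `L` end to end gives one duplicate-free list in which every
block is a window of positions, so it suffices to pick one block per `i` with pairwise disjoint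
windows. The family whose first block ends first takes that block; every other family drops its
first block, and its remaining blocks all start after that point.
-/

theorem exists_pairwise_disjoint_blocks {ι α : Type*} [LinearOrder α] (p : ι → ℕ → α)
    (hp : ∀ i, Monotone (p i)) (S : Finset ι) :
    ∃ f : ι → ℕ, (∀ i ∈ S, f i < S.card) ∧ ∀ i ∈ S, ∀ j ∈ S, i ≠ j →
      Disjoint (Set.Ico (p i (f i)) (p i (f i + 1))) (Set.Ico (p j (f j)) (p j (f j + 1))) := by
  induction S using Finset.strongInduction generalizing p with
  | H S ih =>
  obtain rfl | hS := S.eq_empty_or_nonempty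
  · exact ⟨0, by simp, by simp⟩
  obtain ⟨i₀, hi₀, hmin⟩ := S.exists_min_image (fun i => p i 1) hS
  obtain ⟨f, hf, hdisj⟩ := ih (S.erase i₀) (Finset.erase_ssubset hi₀)
    (fun i h => p i (h + 1)) (fun i _ _ h => hp i (by omega))
  have hfirst : ∀ j ∈ S, j ≠ i₀ → Disjoint (Set.Ico (p i₀ 0) (p i₀ 1))
      (Set.Ico (p j (f j + 1)) (p j (f j + 1 + 1))) := fun j hj _ =>
    Set.disjoint_of_subset_right (Set.Ico_subset_Ico_left ((hmin j hj).trans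
      ((hp j) (by omega)))) Set.Ico_disjoint_Ico_same
  refine ⟨fun i => if i = i₀ then 0 else f i + 1, fun i hi => ?_, fun i hi j hj hij => ?_⟩
  · have := Finset.card_erase_add_one hi₀
    dsimp only
    split_ifs with h
    · omega
    · have := hf i (Finset.mem_erase.2 ⟨h, hi⟩); omega
  · by_cases hi' : i = i₀ <;> by_cases hj' : j = i₀
    · exact absurd (hi'.trans hj'.symm) hij
    · subst hi'; simpa [hj'] using hfirst j hj hj'
    · subst hj'; simpa [hi'] using (hfirst i hi hi').symm
    · simpa [hi', hj'] using
        hdisj i (Finset.mem_erase.2 ⟨hi', hi⟩) j (Finset.mem_erase.2 ⟨hj', hj⟩) hij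

namespace List
variable {α : Type*}

theorem exists_mem_Ico_of_mem_extract {M : List α} {a b : ℕ} {v : α}
    (hv : v ∈ M.extract a b) :
    ∃ n ∈ Set.Ico a b, M[n]? = some v := by
  obtain ⟨n, hn⟩ := mem_iff_getElem?.1 hv
  have hlt : n < b - a := by
    by_contra h
    simp [h] at hn
  refine ⟨a + n, ⟨by omega, by omega⟩, ?_⟩
  simpa [getElem?_take, hlt, getElem?_drop] using hn

theorem Nodup.disjoint_extract {M : List α} (hM : M.Nodup) {a b a' b' : ℕ}
    (h : _root_.Disjoint (Set.Ico a b) (Set.Ico a' b')) :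
    (M.extract a b).Disjoint (M.extract a' b') := by
  intro v hv hv'
  obtain ⟨n, hn, hnv⟩ := exists_mem_Ico_of_mem_extract hv
  obtain ⟨n', hn', hnv'⟩ := exists_mem_Ico_of_mem_extract hv'
  have hlt : n < M.length := (getElem?_eq_some_iff.1 hnv).1
  rw [(getElem?_inj hlt hM).1 (hnv.trans hnv'.symm)] at hn
  exact Set.disjoint_left.1 h hn hn'

theorem extract_eq_of_eq_append {M q₁ q₂ : List α} {s e : ℕ}
    (h : M.extract s e = q₁ ++ q₂) :
    M.extract s (s + q₁.length) = q₁ ∧ M.extract (s + q₁.length) e = q₂ := by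
  have hlen : q₁.length ≤ e - s := by
    have := congrArg length h; simp at this; omega
  constructor
  · have := congrArg (take q₁.length) h
    rw [take_take, min_eq_left hlen, take_left' rfl] at this
    simpa only [extract_eq_take_drop, Nat.add_sub_cancel_left] using this
  · have := congrArg (drop q₁.length) h
    simp only [extract_eq_take_drop, drop_left', drop_take, drop_drop] at this ⊢
    rw [← this]; congr 1; omega

theorem IsInfix.exists_eq_extract {q M : List α} (h : q <:+: M) :
    ∃ s e, M.extract s e = q := by
  obtain ⟨A, B, rfl⟩ := h
  exact ⟨A.length, A.length + q.length, by simp⟩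

end List

namespace Alternating

variable {V : Type} {X Y : Set V} {l : List V}

theorem take (h : Alternating X Y l) (n : ℕ) : Alternating X Y (l.take n) := by
  intro i hi
  simpa using h i (by simp at hi; omega)

theorem drop_two_mul (h : Alternating X Y l) (n : ℕ) : Alternating X Y (l.drop (2 * n)) := by
  intro i hi
  have := h (2 * n + i) (by simp at hi; omega)
  simpa [Nat.add_mul_mod_self_left] using this

end Alternating

theorem exists_alternating_windows {V : Type} {X Y : Set V} (M : List V) (w c s e : ℕ)
    {l : List V} (hl : l.Sublist (M.extract s e)) (halt : Alternating X Y l)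
    (hlen : 2 * w * c ≤ l.length) :
    ∃ p : ℕ → ℕ, Monotone p ∧ p 0 = s ∧ ∀ h < c,
      M.extract (p h) (p (h + 1)) <:+: M.extract s e ∧
      ∃ b : List V, b.Sublist (M.extract (p h) (p (h + 1))) ∧ b.length = 2 * w ∧
        Alternating X Y b := by
  induction c generalizing s e l with
  | zero => exact ⟨fun _ => s, monotone_const, rfl, by simp⟩
  | succ c ih =>
    rw [Nat.mul_succ] at hlen
    rw [← List.take_append_drop (2 * w) l] at hl
    obtain ⟨q₁, q₂, hq, hl₁, hl₂⟩ := List.append_sublist_iff.1 hl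
    obtain ⟨hq₁, hq₂⟩ := List.extract_eq_of_eq_append hq
    have hlen' : 2 * w * c ≤ (l.drop (2 * w)).length := by
      rw [List.length_drop]; omega
    obtain ⟨p, hp, hp0, hwin⟩ := ih _ _ (hq₂ ▸ hl₂) (halt.drop_two_mul w) hlen'
    refine ⟨(fun | 0 => s | h + 1 => p h), monotone_nat_of_le_succ ?_, rfl, ?_⟩
    · rintro (_ | h)
      · simp [hp0]
      · exact hp h.le_succ
    · rintro (_ | h) hh
      · refine ⟨?_, l.take (2 * w), ?_, ?_, halt.take _⟩
        · simpa [hp0, hq₁, hq] using List.infix_append [] q₁ q₂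
        · simpa [hp0, hq₁] using hl₁
        · rw [List.length_take]; omega
      · obtain ⟨hinf, hb⟩ := hwin h (by omega)
        exact ⟨hinf.trans (hq ▸ hq₂ ▸ (List.suffix_append q₁ q₂).isInfix), hb⟩

section Paths

variable {V : Type} {G : Dgraph V}

def Dpath.ofInfix (P : Dpath G) {l : List V} (hl : l <:+: P.verts) (hne : l ≠ []) : Dpath G :=
  ⟨l, hne, P.nodup.sublist hl.sublist, P.chain.infix hl⟩

theorem Dpath.bddAbove_hasAlt (P : Dpath G) (X Y : Set V) : BddAbove {m | HasAlt P X Y m} :=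
  ⟨P.verts.length, fun _ ⟨_, hl, hlen, _⟩ => by have := hl.length_le; omega⟩

theorem Dpath.hasAlt_wiggle (P : Dpath G) (X Y : Set V) : HasAlt P X Y (wiggle P X Y) :=
  Nat.sSup_mem (s := {m | HasAlt P X Y m})
    ⟨0, [], List.nil_sublist _, rfl, fun _ h => absurd h (Nat.not_lt_zero _)⟩
    (P.bddAbove_hasAlt X Y)

theorem HasAlt.le_wiggle {P : Dpath G} {X Y : Set V} {m : ℕ} (h : HasAlt P X Y m) :
    m ≤ wiggle P X Y :=
  le_csSup (P.bddAbove_hasAlt X Y) h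

theorem Dpath.exists_wiggle_windows (Q : Dpath G) {M : List V} (hQM : Q.verts <:+: M)
    {X Y : Set V} {c w : ℕ} (hw : 0 < w) (hwig : c * w ≤ wiggle Q X Y) :
    ∃ p : ℕ → ℕ, Monotone p ∧ ∀ h < c, ∃ R : Dpath G,
      R.IsSubpath Q ∧ w ≤ wiggle R X Y ∧ R.verts = M.extract (p h) (p (h + 1)) := by
  obtain ⟨s, e, hQ⟩ := hQM.exists_eq_extract
  obtain ⟨l, hl, hlen, halt⟩ := Q.hasAlt_wiggle X Y
  obtain ⟨p, hp, -, hwin⟩ := exists_alternating_windows M w c s e (hQ ▸ hl) halt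
    (by rw [hlen, mul_assoc, mul_comm w]; exact Nat.mul_le_mul_left 2 hwig)
  refine ⟨p, hp, fun h hh => ?_⟩
  obtain ⟨hinf, b, hb, hblen, hbalt⟩ := hwin h hh
  have hne : M.extract (p h) (p (h + 1)) ≠ [] := by
    rintro hnil
    rw [hnil, List.sublist_nil] at hb
    simp [hb] at hblen
    omega
  rw [hQ] at hinf
  exact ⟨Q.ofInfix hinf hne, hinf, HasAlt.le_wiggle ⟨b, hb, hblen, hbalt⟩, rfl⟩

theorem IsLinkage.nodup_flatten {k : ℕ} {L : Fin k → Dpath G} (hL : IsLinkage L) :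
    (List.ofFn fun j => (L j).verts).flatten.Nodup := by
  refine List.nodup_flatten.2 ⟨?_, List.pairwise_ofFn.2 fun i j hij v hv hv' =>
    Set.disjoint_left.1 (hL i j hij.ne) hv hv'⟩
  simp only [List.mem_ofFn]
  rintro _ ⟨j, rfl⟩
  exact (L j).nodup

end Paths

theorem disjoint_wiggle_segments_general {V : Type} {k c : ℕ} (G : Dgraph V)
    (w : ℕ) (hw : 0 < w)
    (L : Fin k → Dpath G) (hL : IsLinkage L)
    (Q : Fin c → Dpath G) (hQ : ∀ i, ∃ j, (Q i).IsSubpath (L j))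
    (X Y : Fin c → Set V)
    (hwig : ∀ i, c * w ≤ wiggle (Q i) (X i) (Y i)) :
    ∃ R : Fin c → Dpath G,
      (∀ i, (R i).IsSubpath (Q i) ∧ w ≤ wiggle (R i) (X i) (Y i)) ∧
      ∀ i j, i ≠ j → Disjoint (R i).support (R j).support := by
  set M := (List.ofFn fun j => (L j).verts).flatten
  have hQM : ∀ i, (Q i).verts <:+: M := fun i =>
    let ⟨j, hj⟩ := hQ i
    hj.trans (List.infix_of_mem_flatten (List.mem_ofFn.2 ⟨j, rfl⟩))
  choose p hp R hR using fun i => (Q i).exists_wiggle_windows (hQM i) hw (hwig i)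
  obtain ⟨f, hfc, hdisj⟩ := exists_pairwise_disjoint_blocks p hp Finset.univ
  have hf : ∀ i, f i < c := fun i => by simpa using hfc i (Finset.mem_univ i)
  refine ⟨fun i => R i (f i) (hf i), fun i => (hR i _ (hf i)).imp_right And.left,
    fun i j hij => Set.disjoint_left.2 fun v hvi hvj => ?_⟩
  simp only [Dpath.support, Set.mem_ofPred_eq, (hR _ _ _).2.2] at hvi hvj
  exact hL.nodup_flatten.disjoint_extract
    (hdisj i (Finset.mem_univ i) j (Finset.mem_univ j) hij) hvi hvj

/-- Theorem 3.2: disjoint wiggle segments. -/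
theorem disjoint_wiggle_segments {V : Type} [Fintype V] {k c : ℕ} (G : Dgraph V)
    (w : ℕ) (hw : 0 < w)
    (L : Fin k → Dpath G) (hL : IsLinkage L)
    (Q : Fin c → Dpath G) (hQ : ∀ i, ∃ j, (Q i).IsSubpath (L j))
    (X Y : Fin c → Set V)
    (hXL : ∀ i, X i ⊆ linkSupport L) (hYL : ∀ i, Y i ⊆ linkSupport L)
    (hdisj : ∀ i, Disjoint (X i) (Y i))
    (hdisj' : ∀ i j, i ≠ j →
      Disjoint (X i) (X j) ∧ Disjoint (Y i) (Y j) ∧ Disjoint (X i) (Y j))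
    (hwig : ∀ i, c * w ≤ wiggle (Q i) (X i) (Y i)) :
    ∃ R : Fin c → Dpath G,
      (∀ i, (R i).IsSubpath (Q i) ∧ w ≤ wiggle (R i) (X i) (Y i)) ∧
      ∀ i j, i ≠ j → Disjoint (R i).support (R j).support :=
  disjoint_wiggle_segments_general G w hw L hL Q hQ X Y hwig
end

section
/- Let L be a minimum linkage for a problem instance (G,s_1,t_1,…,s_k,t_k), let ℓ≥3, let C be a clique of G, let Q' be a subpath of some member of L, and let Q be a subpath of Q' with |C∩V(Q)|≥ℓ. Let v∈C∖V(L) be adjacent from each of the last ℓ vertices of Q in C. Then v is adjacent from each of the last ℓ vertices of Q' in C. -/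
open scoped Classical

/-! Suppose some `u` among the last `ℓ` vertices of `Q'` in `C` is not adjacent to `v`. Then `u`
lies on `Q'` after `Q`, and `v → u` since `C` is semicomplete. Let `x` be the first of the last
`ℓ` vertices of `Q` in `C`, so `x → v`; at least `ℓ - 1 ≥ 2` vertices lie strictly between `x` and
`u` on the member of `L` containing `Q'`. Replacing them by `v ∉ V(L)` gives a linkage with the
same ends and fewer vertices, contradicting minimality. -/

namespace List

variable {α : Type*}

theorem rtake_append_of_le_length {l₁ l₂ : List α} {n : ℕ} (h : n ≤ l₂.length) :
    (l₁ ++ l₂).rtake n = l₂.rtake n := by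
  simp only [rtake, length_append, drop_append]
  rw [drop_eq_nil_of_le (by omega), nil_append]
  congr 1
  omega

theorem mem_rtake_of_mem_rtake_append {l₁ l₂ : List α} {n : ℕ} {a : α}
    (h : a ∈ (l₁ ++ l₂).rtake n) (ha : a ∉ l₂) : a ∈ l₁.rtake n := by
  simp only [rtake, length_append, drop_append] at h
  rcases mem_append.1 h with h | h
  · exact drop_subset_drop_left l₁ (by omega) h
  · exact absurd (mem_of_mem_drop h) ha

theorem exists_eq_append_cons_of_cons_sublist {a : α} {l l' : List α} (h : a :: l <+ l') :
    ∃ r₁ r₂, l' = r₁ ++ a :: r₂ ∧ l <+ r₂ := by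
  obtain ⟨r₁, r₂, rfl, ha, hl⟩ := cons_sublist_iff.1 h
  obtain ⟨s, t, rfl⟩ := append_of_mem ha
  exact ⟨s, t ++ r₂, by simp, hl.trans (sublist_append_right t r₂)⟩

end List

theorem inOrderIn_sublist {V : Type} (l : List V) (C : Set V) : (inOrderIn l C).Sublist l :=
  List.filter_sublist

namespace Dpath

variable {V : Type} {G : Dgraph V}

theorem ncard_support (P : Dpath G) : P.support.ncard = P.verts.length := by
  rw [support, ← List.coe_toFinset, Set.ncard_coe_finset, List.toFinset_card_of_nodup P.nodup]

theorem ncard_inter_support (P : Dpath G) (C : Set V) :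
    (C ∩ P.support).ncard = (inOrderIn P.verts C).length := by
  have hC : C ∩ P.support = {v | v ∈ inOrderIn P.verts C} := by
    ext v
    simp [inOrderIn, support, and_comm]
  rw [hC, ← List.coe_toFinset, Set.ncard_coe_finset,
    List.toFinset_card_of_nodup ((inOrderIn_sublist _ C).nodup P.nodup)]

theorem first_eq_of_prefix {P P' : Dpath G} {l : List V} (hl : l ≠ [])
    (h : l <+: P.verts) (h' : l <+: P'.verts) : P.first = P'.first :=
  (h.head hl).symm.trans (h'.head hl)

theorem last_eq_of_suffix {P P' : Dpath G} {l : List V} (hl : l ≠ [])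
    (h : l <:+ P.verts) (h' : l <:+ P'.verts) : P.last = P'.last :=
  (h.getLast hl).symm.trans (h'.getLast hl)

theorem lastIn_sublist (P : Dpath G) (C : Set V) (m : ℕ) : (lastIn P C m).Sublist P.verts :=
  (List.drop_sublist _ _).trans (inOrderIn_sublist _ C)

theorem mem_lastIn_or_mem_of_verts_eq {P Q : Dpath G} {s t : List V} {C : Set V} {m : ℕ}
    (hPQ : s ++ Q.verts ++ t = P.verts) (hm : m ≤ (C ∩ Q.support).ncard) {u : V}
    (hu : u ∈ lastIn P C m) : u ∈ lastIn Q C m ∨ (u ∈ C ∧ u ∈ t) := by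
  have hsplit : inOrderIn P.verts C = inOrderIn s C ++ inOrderIn Q.verts C ++ inOrderIn t C := by
    simp only [← hPQ, inOrderIn, List.filter_append]
  by_cases hut : u ∈ inOrderIn t C
  · simp only [inOrderIn, List.mem_filter, decide_eq_true_eq] at hut
    exact Or.inr hut.symm
  · left
    rw [ncard_inter_support] at hm
    rw [lastIn, hsplit] at hu
    have h := List.mem_rtake_of_mem_rtake_append hu hut
    rwa [List.rtake_append_of_le_length hm] at h

theorem exists_verts_eq_append_mem_lastIn {Q : Dpath G} {C : Set V} {m : ℕ} (hm₀ : 0 < m)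
    (hm : m ≤ (C ∩ Q.support).ncard) :
    ∃ a x b, Q.verts = a ++ x :: b ∧ x ∈ lastIn Q C m ∧ m - 1 ≤ b.length := by
  have hlen : (lastIn Q C m).length = m := by
    rw [ncard_inter_support] at hm
    simp only [lastIn, List.length_drop]
    omega
  obtain ⟨x, r, hxr⟩ := List.exists_cons_of_length_pos (l := lastIn Q C m) (by omega)
  obtain ⟨a, b, hab, hrb⟩ :=
    List.exists_eq_append_cons_of_cons_sublist (hxr ▸ lastIn_sublist Q C m)
  refine ⟨a, x, b, hab, by simp [hxr], ?_⟩
  have := hrb.length_le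
  simp only [hxr, List.length_cons] at hlen
  omega

theorem exists_bypass (P : Dpath G) {A M B : List V} {x u v : V}
    (hP : P.verts = A ++ x :: (M ++ u :: B)) (hv : v ∉ P.verts) (hxv : G.adj x v)
    (hvu : G.adj v u) :
    ∃ P' : Dpath G, P'.verts = A ++ x :: v :: u :: B ∧ P'.first = P.first ∧ P'.last = P.last := by
  have hpre : (A ++ [x]) <+: P.verts := ⟨M ++ u :: B, by simp [hP]⟩
  have hsuf : (u :: B) <:+ P.verts := ⟨A ++ x :: M, by simp [hP]⟩
  have hsub : (A ++ x :: u :: B).Sublist P.verts :=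
    hP ▸ ((List.sublist_append_right M (u :: B)).cons_cons x).append_left A
  have hnodup : (A ++ x :: v :: u :: B).Nodup := by
    rw [show A ++ x :: v :: u :: B = (A ++ [x]) ++ v :: u :: B by simp, List.nodup_middle]
    refine List.nodup_cons.2 ⟨fun h => hv (hsub.subset (by simpa using h)), ?_⟩
    simpa using hsub.nodup P.nodup
  have hchain : (A ++ x :: v :: u :: B).IsChain G.adj := by
    rw [show A ++ x :: v :: u :: B = (A ++ [x]) ++ v :: u :: B by simp]
    refine (P.chain.prefix hpre).append ((P.chain.suffix hsuf).cons ?_) ?_ <;> simp [hxv, hvu]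
  refine ⟨⟨A ++ x :: v :: u :: B, by simp, hnodup, hchain⟩, rfl, ?_, ?_⟩
  · exact first_eq_of_prefix (by simp) ⟨v :: u :: B, by simp⟩ hpre
  · exact last_eq_of_suffix (l := u :: B) (by simp) ⟨A ++ [x, v], by simp⟩ hsuf

end Dpath

section Linkage

variable {V : Type} {G : Dgraph V} {k : ℕ} {L : Fin k → Dpath G}

theorem finite_linkSupport (L : Fin k → Dpath G) : (linkSupport L).Finite :=
  Set.finite_iUnion fun i => List.finite_toSet (L i).verts

theorem support_subset_linkSupport (L : Fin k → Dpath G) (i : Fin k) :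
    (L i).support ⊆ linkSupport L :=
  Set.subset_iUnion (fun j => (L j).support) i

theorem IsLinkage.update (hL : IsLinkage L) {i : Fin k} {P : Dpath G}
    (hP : P.support ⊆ (L i).support ∪ (linkSupport L)ᶜ) : IsLinkage (Function.update L i P) := by
  have hdisj : ∀ j ≠ i, Disjoint (L j).support P.support := by
    refine fun j hj => Set.disjoint_left.2 fun w hwj hwP => ?_
    rcases hP hwP with hwi | hwL
    · exact Set.disjoint_left.1 (hL j i hj) hwj hwi
    · exact hwL (support_subset_linkSupport L j hwj)
  intro j j' hjj'
  by_cases hj : j = i <;> by_cases hj' : j' = i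
  · exact absurd (hj.trans hj'.symm) hjj'
  · subst hj; simpa [hj'] using (hdisj j' hj').symm
  · subst hj'; simpa [hj] using hdisj j hj
  · simpa [hj, hj'] using hL j j' hjj'

theorem IsLinkage.linkSupport_update_subset (hL : IsLinkage L) (i : Fin k) (P : Dpath G) :
    linkSupport (Function.update L i P) ⊆ P.support ∪ (linkSupport L \ (L i).support) := by
  intro w hw
  obtain ⟨j, hwj⟩ := Set.mem_iUnion.1 hw
  rcases eq_or_ne j i with rfl | hj
  · exact Or.inl (by simpa using hwj)
  · rw [Function.update_of_ne hj] at hwj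
    exact Or.inr ⟨support_subset_linkSupport L j hwj, Set.disjoint_left.1 (hL j i hj) hwj⟩

theorem IsMinimumLinkage.length_le (hL : IsMinimumLinkage L) (i : Fin k) (P : Dpath G)
    (hfirst : P.first = (L i).first) (hlast : P.last = (L i).last)
    (hP : P.support ⊆ (L i).support ∪ (linkSupport L)ᶜ) :
    (L i).verts.length ≤ P.verts.length := by
  have hends : ∀ j, (Function.update L i P j).first = (L j).first ∧
      (Function.update L i P j).last = (L j).last := by
    intro j
    rcases eq_or_ne j i with rfl | hj
    · simpa using ⟨hfirst, hlast⟩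
    · simp [hj]
  have hmin := hL.2 _ (hL.1.update hP) hends
  set R := linkSupport L \ (L i).support
  suffices R.ncard + (L i).verts.length ≤ R.ncard + P.verts.length by omega
  calc R.ncard + (L i).verts.length = (linkSupport L).ncard := by
        rw [← Dpath.ncard_support]
        exact Set.ncard_sdiff_add_ncard_of_subset (support_subset_linkSupport L i)
          (finite_linkSupport L)
    _ ≤ (linkSupport (Function.update L i P)).ncard := hmin
    _ ≤ (P.support ∪ R).ncard :=
        Set.ncard_le_ncard (hL.1.linkSupport_update_subset i P)
          ((List.finite_toSet _).union (finite_linkSupport L).sdiff)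
    _ ≤ R.ncard + P.verts.length := by
        rw [← Dpath.ncard_support, add_comm]
        exact Set.ncard_union_le _ _

theorem IsMinimumLinkage.length_le_one_of_bypass (hL : IsMinimumLinkage L) {i : Fin k}
    {A M B : List V} {x u v : V} (hLi : (L i).verts = A ++ x :: (M ++ u :: B))
    (hv : v ∉ linkSupport L) (hxv : G.adj x v) (hvu : G.adj v u) : M.length ≤ 1 := by
  obtain ⟨P, hP, hfirst, hlast⟩ :=
    (L i).exists_bypass hLi (fun h => hv (support_subset_linkSupport L i h)) hxv hvu
  have hPsub : P.support ⊆ (L i).support ∪ (linkSupport L)ᶜ := by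
    intro w hw
    rcases eq_or_ne w v with rfl | hwv
    · exact Or.inr hv
    · left
      simp only [Dpath.support, Set.mem_ofPred_eq, hP, hLi] at hw ⊢
      simp only [List.mem_append, List.mem_cons, hwv, false_or] at hw ⊢
      tauto
  have := hL.length_le i P hfirst hlast hPsub
  simp only [hP, hLi, List.length_append, List.length_cons] at this
  omega

end Linkage

theorem shift_lemma_general {V : Type} {k : ℕ} (G : Dgraph V)
    (sv tv : Fin k → V)
    (L : Fin k → Dpath G) (hL : IsMinimumLinkageFor L sv tv)
    (ℓ : ℕ) (hℓ : 3 ≤ ℓ)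
    (C : Set V) (hC : G.IsClique C)
    (Q' Q : Dpath G) (hQ' : ∃ i, Q'.IsSubpath (L i)) (hQ : Q.IsSubpath Q')
    (hcard : ℓ ≤ (C ∩ Q.support).ncard)
    (v : V) (hv : v ∈ C \ linkSupport L)
    (hadj : ∀ u ∈ lastIn Q C ℓ, G.adj u v) :
    ∀ u ∈ lastIn Q' C ℓ, G.adj u v := by
  intro u hu
  obtain ⟨i, p, q, hQ'i⟩ := hQ'
  obtain ⟨s, t, hQQ'⟩ := hQ
  rcases Dpath.mem_lastIn_or_mem_of_verts_eq hQQ' hcard hu with hQu | ⟨huC, hut⟩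
  · exact hadj u hQu
  by_contra huv
  have huL : u ∈ linkSupport L :=
    support_subset_linkSupport L i (show u ∈ (L i).verts by simp [← hQ'i, ← hQQ', hut])
  have hvu : G.adj v u :=
    (hC u huC v hv.1 (fun h => hv.2 (h ▸ huL))).resolve_left huv
  obtain ⟨a, x, b, hQab, hx, hb⟩ := Dpath.exists_verts_eq_append_mem_lastIn (by omega) hcard
  obtain ⟨c, d, rfl⟩ := List.append_of_mem hut
  have hLi : (L i).verts = (p ++ s ++ a) ++ x :: ((b ++ c) ++ u :: (d ++ q)) := by
    simp [← hQ'i, ← hQQ', hQab]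
  have := hL.2.length_le_one_of_bypass hLi hv.2 (hadj x hx) hvu
  simp only [List.length_append] at this
  omega

/-- Theorem 4.1 (the shift lemma): if `v ∈ C ∖ V(L)` is adjacent from the last `ℓ`
vertices of `Q` in `C`, where `Q` is a subpath of `Q'` and `Q'` a subpath of a member of
the minimum linkage `L`, then `v` is adjacent from the last `ℓ` vertices of `Q'` in `C`. -/
theorem shift_lemma {V : Type} [Fintype V] {k : ℕ} (G : Dgraph V)
    (sv tv : Fin k → V) (hinst : IsInstance sv tv)
    (L : Fin k → Dpath G) (hL : IsMinimumLinkageFor L sv tv)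
    (ℓ : ℕ) (hℓ : 3 ≤ ℓ)
    (C : Set V) (hC : G.IsClique C)
    (Q' Q : Dpath G) (hQ' : ∃ i, Q'.IsSubpath (L i)) (hQ : Q.IsSubpath Q')
    (hcard : ℓ ≤ (C ∩ Q.support).ncard)
    (v : V) (hv : v ∈ C \ linkSupport L)
    (hadj : ∀ u ∈ lastIn Q C ℓ, G.adj u v) :
    ∀ u ∈ lastIn Q' C ℓ, G.adj u v :=
  shift_lemma_general G sv tv L hL ℓ hℓ C hC Q' Q hQ' hQ hcard v hv hadj
end

section
/- Let k,c≥1 and z=c(c(k²+k+1)+k+2). Let (G,s_1,t_1,…,s_k,t_k) be a problem instance where G has a clique-partition (C_1,…,C_c), let L=(P_1,…,P_k) be a minimum linkage for it, let B⊆V(L) be acceptable, and set A=V(G)∖B. Let a∈{1,…,c}, let r_a∈(C_a∩A∩V(L))∖{t_1,…,t_k} be such that (B∩C_a)∪{r_a} is C_a-acceptable for L, and let i∈{1,…,k} be such that r_a∈V(P_i). If B∪{r_a} is not acceptable, then there exists b∈{1,…,c} with b≠a such that the (B∩C_a, A∩C_b)-wiggle number of P_i is at least z. -/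
open scoped Classical

/-! Adding `ra` to `B` changes the wiggle numbers constrained by `Acceptable` only where the
first set is `B ∩ C a`, and only along the path `P i` through `ra`, since the paths of `L` are
disjoint. Deleting `ra` and its successor from an alternating sequence leaves an alternating
sequence one pair shorter, so a violation of the bound `z` for `B ∪ {ra}` forces a
`(B ∩ C a, A ∩ C b)`-wiggle number of `P i` of at least `z`. -/

theorem alternating_iff {V : Type} {X Y : Set V} {l : List V} :
    Alternating X Y l ↔ ∀ q (hq : q < l.length), l[q] ∈ if q % 2 = 0 then X else Y := by
  refine forall₂_congr fun q hq => ?_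
  split_ifs <;> rfl

namespace Alternating

variable {V : Type} {X X' Y Y' : Set V} {l : List V}

theorem mono (h : Alternating X Y l) (hX : X ⊆ X') (hY : Y ⊆ Y') : Alternating X' Y' l := by
  intro q hq
  have := h q hq
  split_ifs at this ⊢
  exacts [hX this, hY this]

theorem of_insert_of_notMem {v : V} (h : Alternating (insert v X) Y l) (hv : v ∉ l) :
    Alternating X Y l := by
  intro q hq
  have := h q hq
  split_ifs at this ⊢
  · exact this.resolve_left fun he => hv (he ▸ List.get_mem l _)
  · exact this

theorem take_append_drop_add_two (h : Alternating X Y l) {p : ℕ} (hp : p % 2 = 0) :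
    Alternating X Y (l.take p ++ l.drop (p + 2)) := by
  rw [alternating_iff] at h ⊢
  intro q hq
  simp only [List.length_append, List.length_take, List.length_drop] at hq
  rcases lt_or_ge q p with hqp | hqp
  · rw [List.getElem_append_left (by simp; omega), List.getElem_take]
    exact h q (by omega)
  · rw [List.getElem_append_right (by simp; omega)]
    simp only [List.getElem_drop, List.length_take, min_eq_left (show p ≤ l.length by omega)]
    have := h (p + 2 + (q - p)) (by omega)
    rwa [show (p + 2 + (q - p)) % 2 = q % 2 by omega] at this

end Alternating

namespace Dpath

variable {V : Type} {G : Dgraph V} [Fintype V] {P : Dpath G} {X X' Y Y' : Set V}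

theorem bddAbove_setOf_hasAlt (P : Dpath G) (X Y : Set V) : BddAbove {m | HasAlt P X Y m} := by
  refine ⟨Fintype.card V, fun m ⟨l, hl, hlen, _⟩ => ?_⟩
  have := hl.length_le.trans P.nodup.length_le_card
  omega

theorem hasAlt_wiggle_s9 (P : Dpath G) (X Y : Set V) : HasAlt P X Y (wiggle P X Y) :=
  Nat.sSup_mem (s := {m | HasAlt P X Y m})
    ⟨0, [], List.nil_sublist _, rfl, fun _ h => absurd h (by simp)⟩ (bddAbove_setOf_hasAlt P X Y)

theorem le_wiggle {m : ℕ} (h : HasAlt P X Y m) : m ≤ wiggle P X Y :=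
  le_csSup (bddAbove_setOf_hasAlt P X Y) h

theorem wiggle_mono (hX : X ⊆ X') (hY : Y ⊆ Y') : wiggle P X Y ≤ wiggle P X' Y' := by
  obtain ⟨l, hl, hlen, halt⟩ := hasAlt_wiggle_s9 P X Y
  exact le_wiggle ⟨l, hl, hlen, halt.mono hX hY⟩

theorem wiggle_insert_of_notMem_support {v : V} (hv : v ∉ P.support) :
    wiggle P (insert v X) Y ≤ wiggle P X Y := by
  obtain ⟨l, hl, hlen, halt⟩ := hasAlt_wiggle_s9 P (insert v X) Y
  exact le_wiggle ⟨l, hl, hlen, halt.of_insert_of_notMem fun hvl => hv (hl.subset hvl)⟩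

/-- An occurrence of `v` in an `(insert v X, Y)`-alternating sequence has even position, so it
can be deleted together with its successor. -/
theorem wiggle_insert_le {v : V} (hv : v ∉ Y) : wiggle P (insert v X) Y ≤ wiggle P X Y + 1 := by
  obtain ⟨l, hl, hlen, halt⟩ := hasAlt_wiggle_s9 P (insert v X) Y
  by_cases hvl : v ∉ l
  · have := le_wiggle ⟨l, hl, hlen, halt.of_insert_of_notMem hvl⟩
    omega
  obtain ⟨p, hp, rfl⟩ := List.getElem_of_mem (not_not.mp hvl)
  have hpar : p % 2 = 0 := by
    by_contra hodd
    have := halt p hp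
    rw [if_neg hodd] at this
    exact hv this
  have hnd : l.Nodup := hl.nodup P.nodup
  have hnot : l[p] ∉ l.take p ++ l.drop (p + 2) := by
    simp only [List.mem_append, List.mem_take_iff_getElem, List.mem_drop_iff_getElem]
    rintro (⟨q, hq, he⟩ | ⟨q, hq, he⟩) <;> have := hnd.getElem_inj_iff.mp he <;> omega
  have hsub : (l.take p ++ l.drop (p + 2)).Sublist l := by
    simpa using ((l.drop p).drop_sublist 2).append_left (l.take p)
  have := le_wiggle (m := wiggle P (insert l[p] X) Y - 1) ⟨_, hsub.trans hl,
    by simp only [List.length_append, List.length_take, List.length_drop]; omega,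
    (halt.take_append_drop_add_two hpar).of_insert_of_notMem hnot⟩
  omega

end Dpath

theorem Dgraph.IsCliquePartition.eq_of_mem {V : Type} {G : Dgraph V} {c : ℕ}
    {C : Fin c → Set V} (hpart : G.IsCliquePartition C) {v : V} {a b : Fin c}
    (ha : v ∈ C a) (hb : v ∈ C b) : a = b :=
  (hpart.2 v).unique ha hb

section InsertVertex

variable {V : Type} {G : Dgraph V} {k c : ℕ} {sv tv : Fin k → V} {C : Fin c → Set V}
  {L : Fin k → Dpath G} {B : Set V} {a : Fin c} {r : V}

theorem insert_inter_eq_ite (hpart : G.IsCliquePartition C) (hr : r ∈ C a) (b : Fin c) :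
    insert r B ∩ C b = if b = a then insert r (B ∩ C a) else B ∩ C b := by
  split_ifs with hb
  · rw [hb, Set.insert_inter_of_mem hr]
  · exact Set.insert_inter_of_notMem fun hrb => hb (hpart.eq_of_mem hrb hr)

theorem cAcceptable_insert_inter (hpart : G.IsCliquePartition C) (hr : r ∈ C a)
    (hacc : ∀ b, CAcceptable sv tv L (C b) (B ∩ C b))
    (hCacc : CAcceptable sv tv L (C a) (insert r (B ∩ C a))) (b : Fin c) :
    CAcceptable sv tv L (C b) (insert r B ∩ C b) := by
  rw [insert_inter_eq_ite hpart hr]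
  split_ifs with hb
  exacts [hb ▸ hCacc, hacc b]

theorem wiggle_insert_inter_le [Fintype V] {z : ℕ} (hpart : G.IsCliquePartition C)
    (hL : IsLinkage L) (hr : r ∈ C a) {i : Fin k} (hri : r ∈ (L i).support)
    (hwiggle : ∀ b b', b ≠ b' → ∀ j, wiggle (L j) (B ∩ C b') (Bᶜ ∩ C b) ≤ z)
    (hsmall : ∀ b, b ≠ a → wiggle (L i) (B ∩ C a) (Bᶜ ∩ C b) < z)
    {b a' : Fin c} (hba' : b ≠ a') (j : Fin k) :
    wiggle (L j) (insert r B ∩ C a') ((insert r B)ᶜ ∩ C b) ≤ z := by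
  have hY : (insert r B)ᶜ ∩ C b ⊆ Bᶜ ∩ C b :=
    Set.inter_subset_inter_left _ (Set.compl_subset_compl.mpr (Set.subset_insert r B))
  have hrY : r ∉ (insert r B)ᶜ ∩ C b := fun hv => hv.1 (Set.mem_insert r B)
  rw [insert_inter_eq_ite hpart hr]
  split_ifs with ha'
  · subst ha'
    by_cases hji : j = i
    · subst hji
      have := hsmall b hba'
      have := (L j).wiggle_insert_le (X := B ∩ C a') hrY
      have := (L j).wiggle_mono (X := B ∩ C a') le_rfl hY
      omega
    · have hrj : r ∉ (L j).support := Set.disjoint_right.mp (hL j i hji) hri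
      calc _ ≤ wiggle (L j) (B ∩ C a') ((insert r B)ᶜ ∩ C b) :=
            (L j).wiggle_insert_of_notMem_support hrj
        _ ≤ wiggle (L j) (B ∩ C a') (Bᶜ ∩ C b) := (L j).wiggle_mono le_rfl hY
        _ ≤ z := hwiggle b a' hba' j
  · exact ((L j).wiggle_mono le_rfl hY).trans (hwiggle b a' hba' j)

end InsertVertex

theorem wiggle_witness_general {V : Type} [Fintype V] {k c : ℕ}
    (G : Dgraph V) (sv tv : Fin k → V)
    (C : Fin c → Set V) (hpart : G.IsCliquePartition C)
    (L : Fin k → Dpath G) (hL : IsMinimumLinkageFor L sv tv)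
    (B : Set V)
    (hacc : Acceptable sv tv L C (zOf k c) B)
    (a : Fin c) (ra : V)
    (hra : ra ∈ ((C a ∩ Bᶜ ∩ linkSupport L) \ Set.range tv))
    (hCacc : CAcceptable sv tv L (C a) (insert ra (B ∩ C a)))
    (i : Fin k) (hri : ra ∈ (L i).support)
    (hnot : ¬ Acceptable sv tv L C (zOf k c) (insert ra B)) :
    ∃ b, b ≠ a ∧ zOf k c ≤ wiggle (L i) (B ∩ C a) (Bᶜ ∩ C b) := by
  obtain ⟨hs, ht, hCaccs, hwiggle⟩ := hacc
  obtain ⟨⟨⟨hraC, -⟩, -⟩, hratv⟩ := hra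
  by_contra! hsmall
  exact hnot ⟨fun j => Set.mem_insert_of_mem ra (hs j),
    fun j hj => hj.elim (fun he => hratv ⟨j, he⟩) (ht j),
    cAcceptable_insert_inter hpart hraC hCaccs hCacc,
    fun _ _ hba' => wiggle_insert_inter_le hpart hL.1.1 hraC hri hwiggle hsmall hba'⟩

/-- Step (1) of the proof of Theorem 3.3: if `B ∪ {r a}` fails to be acceptable, some
other block `C b` witnesses a large `(B ∩ C a, A ∩ C b)`-wiggle number on `P i`. -/
theorem wiggle_witness {V : Type} [Fintype V] {k c : ℕ} (hk : 1 ≤ k) (hc : 1 ≤ c)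
    (G : Dgraph V) (sv tv : Fin k → V) (hinst : IsInstance sv tv)
    (C : Fin c → Set V) (hpart : G.IsCliquePartition C)
    (L : Fin k → Dpath G) (hL : IsMinimumLinkageFor L sv tv)
    (B : Set V) (hBL : B ⊆ linkSupport L)
    (hacc : Acceptable sv tv L C (zOf k c) B)
    (a : Fin c) (ra : V)
    (hra : ra ∈ ((C a ∩ Bᶜ ∩ linkSupport L) \ Set.range tv))
    (hCacc : CAcceptable sv tv L (C a) (insert ra (B ∩ C a)))
    (i : Fin k) (hri : ra ∈ (L i).support)
    (hnot : ¬ Acceptable sv tv L C (zOf k c) (insert ra B)) :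
    ∃ b, b ≠ a ∧ zOf k c ≤ wiggle (L i) (B ∩ C a) (Bᶜ ∩ C b) :=
  wiggle_witness_general G sv tv C hpart L hL B hacc a ra hra hCacc i hri hnot
end

section
/- Let k,c≥1, let (G,s_1,t_1,…,s_k,t_k) be a problem instance where G has a clique-partition (C_1,…,C_c), let L=(P_1,…,P_k) be a minimum linkage for it, let (v_1,…,v_n) be an enumeration of V(L)∖{s_1,…,s_k,t_1,…,t_k}, and let B_h, A_h, 𝒜_h, ℬ_h (0≤h≤n) be as defined, with s=k²+k+3. Then for every h with 0≤h≤n, A_h⊆𝒜_h⁻ and B_h⊆ℬ_h⁺. -/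
open scoped Classical

/-!
A minimum linkage has no forward chords: if `u` comes before `v` on `P i` with some vertex
in between, then `uv` is not an edge, since otherwise skipping the vertices between `u` and
`v` would give a linkage with fewer vertices. Now let `v ∈ A h`, let `R ∈ ℛ h` be the segment
through `v` and `C a` the clique containing `v`. If `v` is not among the first `s` vertices `X`
of `R` in `C a`, then each of the first `s - 1` terms `u` of `X` precedes `v` on `R` with the
last term of `X` in between; `u` and `v` being adjacent in the clique `C a`, the edge can only
be `vu`. The inclusion `B h ⊆ ℬ h⁺` is the mirror image along the segment of `𝒬 h` through `v`.
-/

namespace List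

variable {α : Type*}

theorem exists_sublist_of_mem_take_of_mem_drop_succ {l : List α} {n : ℕ} {x y : α}
    (hx : x ∈ l.take n) (hy : y ∈ l.drop (n + 1)) : ∃ w, [x, w, y] <+ l := by
  have hn : n < l.length := by
    by_contra! hle
    simp [drop_eq_nil_of_le (by omega : l.length ≤ n + 1)] at hy
  rw [← take_append_drop n l, drop_eq_getElem_cons hn]
  exact ⟨l[n], (singleton_sublist.2 hx).append ((singleton_sublist.2 hy).cons_cons _)⟩

theorem exists_eq_append_cons_append_cons_of_sublist {l : List α} {x w y : α}
    (h : [x, w, y] <+ l) : ∃ a b c, l = a ++ x :: (b ++ y :: c) ∧ w ∈ b := by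
  obtain ⟨r₁, r₂, rfl, hx, hwy⟩ := cons_sublist_iff.1 h
  obtain ⟨t₁, t₂, rfl, hw, hy⟩ := cons_sublist_iff.1 hwy
  obtain ⟨a, b₁, rfl⟩ := append_of_mem hx
  obtain ⟨d, c, rfl⟩ := append_of_mem (singleton_sublist.1 hy)
  exact ⟨a, b₁ ++ t₁ ++ d, c, by simp, by simp [hw]⟩

end List

section

variable {V : Type} {G : Dgraph V}

namespace Dpath

def shortcut (P : Dpath G) (a b c : List V) (x y : V) (hP : P.verts = a ++ x :: (b ++ y :: c))
    (hxy : G.adj x y) : Dpath G where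
  verts := a ++ x :: y :: c
  ne := by simp
  nodup := P.nodup.sublist (hP ▸ by simp)
  chain := by
    have hc : List.IsChain G.adj P.verts := P.chain
    show List.IsChain G.adj _
    rw [hP, show a ++ x :: (b ++ y :: c) = (a ++ [x]) ++ b ++ y :: c by simp,
      List.isChain_append, List.isChain_append] at hc
    rw [show a ++ x :: y :: c = (a ++ [x]) ++ y :: c by simp, List.isChain_append]
    exact ⟨hc.1.1, hc.2.1, by simpa using hxy⟩

end Dpath

theorem linkSupport_finite {k : ℕ} (L : Fin k → Dpath G) : (linkSupport L).Finite :=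
  Set.finite_iUnion fun i => List.finite_toSet (L i).verts

namespace IsMinimumLinkage

variable {k : ℕ} {L : Fin k → Dpath G}

theorem not_support_ssubset (hL : IsMinimumLinkage L) {i : Fin k} {P : Dpath G}
    (hfirst : P.first = (L i).first) (hlast : P.last = (L i).last) :
    ¬ P.support ⊂ (L i).support := by
  intro hP
  set L' := Function.update L i P
  have hsub : ∀ j, (L' j).support ⊆ (L j).support := by
    intro j
    rcases eq_or_ne j i with rfl | hj
    · simpa [L'] using hP.subset
    · simp [L', hj]
  have hlink : IsLinkage L' := fun a b hab => (hL.1 a b hab).mono (hsub a) (hsub b)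
  have hends : ∀ j, (L' j).first = (L j).first ∧ (L' j).last = (L j).last := by
    intro j
    rcases eq_or_ne j i with rfl | hj
    · simp [L', hfirst, hlast]
    · simp [L', hj]
  obtain ⟨b, hbL, hbP⟩ := Set.exists_of_ssubset hP
  have hss : linkSupport L' ⊂ linkSupport L := by
    refine ⟨Set.iUnion_mono hsub, fun h => ?_⟩
    obtain ⟨j, hj⟩ := Set.mem_iUnion.1 (h (Set.mem_iUnion.2 ⟨i, hbL⟩))
    rcases eq_or_ne j i with rfl | hji
    · exact hbP (by simpa [L'] using hj)
    · exact (hL.1 j i hji).ne_of_mem (hsub j hj) hbL rfl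
  exact (hL.2 L' hlink hends).not_gt (Set.ncard_lt_ncard hss (linkSupport_finite L))

theorem not_adj_of_sublist (hL : IsMinimumLinkage L) {i : Fin k} {x w y : V}
    (h : [x, w, y].Sublist (L i).verts) : ¬ G.adj x y := by
  intro hxy
  obtain ⟨a, b, c, hP, hw⟩ := List.exists_eq_append_cons_append_cons_of_sublist h
  set P := (L i).shortcut a b c x y hP hxy
  have hfirst : P.first = (L i).first := by
    simp only [Dpath.first, P, Dpath.shortcut, hP]
    cases a <;> simp
  have hlast : P.last = (L i).last := by
    simp [Dpath.last, P, Dpath.shortcut, hP]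
  have hwP : w ∉ P.verts := by
    have hnd := (L i).nodup
    rw [hP] at hnd
    simp only [P, Dpath.shortcut]
    grind [List.nodup_append, List.nodup_cons]
  refine hL.not_support_ssubset hfirst hlast ⟨fun z hz => ?_, fun hsub => hwP (hsub ?_)⟩
  · have hz : z ∈ a ++ x :: y :: c := hz
    show z ∈ (L i).verts
    rw [hP]
    grind
  · show w ∈ (L i).verts
    simp [hP, hw]

theorem adj_of_sublist (hL : IsMinimumLinkage L) {K : Set V} (hK : G.IsClique K) {i : Fin k}
    {x w y : V} (hx : x ∈ K) (hy : y ∈ K) (h : [x, w, y].Sublist (L i).verts) : G.adj y x := by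
  have hxy : x ≠ y := by
    have := (L i).nodup.sublist h
    simp_all
  exact (hK x hx y hy hxy).resolve_left (hL.not_adj_of_sublist h)

end IsMinimumLinkage

theorem exists_mem_segsIn {k : ℕ} (L : Fin k → Dpath G) {S : Set V} {i : Fin k} {v : V}
    (hv : v ∈ (L i).verts) (hvS : v ∈ S) :
    ∃ R ∈ segsIn L S, v ∈ R.verts ∧ R.IsSubpath (L i) := by
  set T := {q : List V | q <:+: (L i).verts ∧ v ∈ q ∧ ∀ x ∈ q, x ∈ S}
  have hT : T.Finite :=
    (L i).verts.sublists.finite_toSet.subset fun q hq => List.mem_sublists.2 hq.1.sublist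
  obtain ⟨q, ⟨hq, hvq, hqS⟩, hmax⟩ :=
    T.exists_max_image List.length hT ⟨[v], (List.singleton_infix_iff _ _).2 hv, by simp, by simpa⟩
  refine ⟨⟨q, List.ne_nil_of_mem hvq, (L i).nodup.sublist hq.sublist, (L i).chain.infix hq⟩,
    ⟨i, hq, hqS, fun R hR hRS hqR => ?_⟩, hvq, hq⟩
  exact (hqR.eq_of_length (le_antisymm hqR.length_le
    (hmax _ ⟨hR, hqR.subset hvq, hRS⟩))).symm

section PlusMinus

variable {k c : ℕ} {L : Fin k → Dpath G} {C : Fin c → Set V}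

theorem mem_minusSet_of_mem_segsIn (hL : IsMinimumLinkage L) (hC : G.IsCliquePartition C)
    (s : ℕ) {S : Set V} {v : V} (hvS : v ∈ S) (hvL : v ∈ linkSupport L) :
    v ∈ minusSet G C s {X | ∃ R ∈ segsIn L S, ∃ a, X = firstUpTo R (C a) s} := by
  obtain ⟨i, hvi⟩ := Set.mem_iUnion.1 hvL
  obtain ⟨R, hR, hvR, hRi⟩ := exists_mem_segsIn L hvi hvS
  obtain ⟨a, hva, -⟩ := hC.2 v
  set f := inOrderIn R.verts (C a)
  have hfC : ∀ x ∈ f, x ∈ C a := fun x hx => by simpa using (List.mem_filter.1 hx).2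
  have hfL : f.Sublist (L i).verts := List.filter_sublist.trans hRi.sublist
  refine ⟨f.take s, ⟨R, hR, a, rfl⟩, a,
    Set.insert_subset hva fun x hx => hfC x (List.mem_of_mem_take hx), ?_⟩
  by_cases hvX : v ∈ f.take s
  · exact .inl hvX
  have hvd : v ∈ f.drop s := by
    have hvf : v ∈ f := List.mem_filter.2 ⟨hvR, by simpa using hva⟩
    rw [← List.take_append_drop s f, List.mem_append] at hvf
    exact hvf.resolve_left hvX
  have hs : s < f.length := by
    by_contra! hle
    simp [List.drop_eq_nil_of_le hle] at hvd
  refine .inr ⟨hvX, List.length_take_of_le hs.le, fun u hu => ?_⟩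
  rw [List.take_take, min_eq_left (Nat.sub_le _ _)] at hu
  have hs0 : s ≠ 0 := by rintro rfl; simp at hu
  obtain ⟨w, huwv⟩ := List.exists_sublist_of_mem_take_of_mem_drop_succ hu
    (by rwa [Nat.sub_add_cancel (Nat.pos_of_ne_zero hs0)])
  exact hL.adj_of_sublist (hC.1 a) (hfC u (List.mem_of_mem_take hu)) hva (huwv.trans hfL)

theorem mem_plusSet_of_mem_segsIn (hL : IsMinimumLinkage L) (hC : G.IsCliquePartition C)
    (s : ℕ) {S : Set V} {v : V} (hvS : v ∈ S) (hvL : v ∈ linkSupport L) :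
    v ∈ plusSet G C s {X | ∃ Q ∈ segsIn L S, ∃ a, X = lastIn Q (C a) s} := by
  obtain ⟨i, hvi⟩ := Set.mem_iUnion.1 hvL
  obtain ⟨Q, hQ, hvQ, hQi⟩ := exists_mem_segsIn L hvi hvS
  obtain ⟨a, hva, -⟩ := hC.2 v
  set f := inOrderIn Q.verts (C a)
  have hfC : ∀ x ∈ f, x ∈ C a := fun x hx => by simpa using (List.mem_filter.1 hx).2
  have hfL : f.Sublist (L i).verts := List.filter_sublist.trans hQi.sublist
  refine ⟨f.drop (f.length - s), ⟨Q, hQ, a, rfl⟩, a,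
    Set.insert_subset hva fun x hx => hfC x (List.mem_of_mem_drop hx), ?_⟩
  by_cases hvX : v ∈ f.drop (f.length - s)
  · exact .inl hvX
  have hvt : v ∈ f.take (f.length - s) := by
    have hvf : v ∈ f := List.mem_filter.2 ⟨hvQ, by simpa using hva⟩
    rw [← List.take_append_drop (f.length - s) f, List.mem_append] at hvf
    exact hvf.resolve_right hvX
  have hs : s < f.length := by
    by_contra! hle
    simp [Nat.sub_eq_zero_of_le hle] at hvt
  have hXlen : (f.drop (f.length - s)).length = s := by
    rw [List.length_drop]
    omega
  refine .inr ⟨hvX, hXlen, fun u hu => ?_⟩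
  rw [hXlen, List.drop_drop] at hu
  have hs0 : s ≠ 0 := by rintro rfl; simp at hu
  obtain ⟨w, hvwu⟩ := List.exists_sublist_of_mem_take_of_mem_drop_succ hvt
    (by rwa [show f.length - s + (s - (s - 1)) = f.length - s + 1 by omega] at hu)
  exact hL.adj_of_sublist (hC.1 a) hva (hfC u (List.mem_of_mem_drop hu)) (hvwu.trans hfL)

end PlusMinus

theorem BsetOf_subset_linkSupport {k : ℕ} {L : Fin k → Dpath G} {sv tv : Fin k → V}
    {e : List V} (hL : IsLinkageFor L sv tv) (he : IsEnumeration L sv tv e) (h : ℕ) :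
    BsetOf sv e h ⊆ linkSupport L := by
  rintro v (⟨i, rfl⟩ | hv)
  · exact Set.mem_iUnion.2 ⟨i, (hL.2 i).1 ▸ List.head_mem _⟩
  · have hve : v ∈ {w | w ∈ e} := List.mem_of_mem_take hv
    rw [he.2] at hve
    exact hve.1

end

theorem subset_plus_minus_general {V : Type} {k c : ℕ}
    (G : Dgraph V) (sv tv : Fin k → V)
    (C : Fin c → Set V) (hpart : G.IsCliquePartition C)
    (L : Fin k → Dpath G) (hL : IsMinimumLinkageFor L sv tv)
    (e : List V) (henum : IsEnumeration L sv tv e) :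
    ∀ h ≤ e.length,
      AsetOf L sv e h ⊆ minusSet G C (k ^ 2 + k + 3) (AseqsOf G C (k ^ 2 + k + 3) L sv e h) ∧
      BsetOf sv e h ⊆ plusSet G C (k ^ 2 + k + 3) (BseqsOf G C (k ^ 2 + k + 3) L sv e h) := by
  intro h _
  exact ⟨fun v hv => mem_minusSet_of_mem_segsIn hL.2 hpart _ hv hv.1,
    fun v hv => mem_plusSet_of_mem_segsIn hL.2 hpart _ hv
      (BsetOf_subset_linkSupport hL.1 henum h hv)⟩

/-- Step (2) of the proof of Theorem 4.2: `A h ⊆ 𝒜 h⁻` and `B h ⊆ ℬ h⁺`. -/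
theorem subset_plus_minus {V : Type} [Fintype V] {k c : ℕ} (hk : 1 ≤ k) (hc : 1 ≤ c)
    (G : Dgraph V) (sv tv : Fin k → V) (hinst : IsInstance sv tv)
    (C : Fin c → Set V) (hpart : G.IsCliquePartition C)
    (L : Fin k → Dpath G) (hL : IsMinimumLinkageFor L sv tv)
    (e : List V) (henum : IsEnumeration L sv tv e) :
    ∀ h ≤ e.length,
      AsetOf L sv e h ⊆ minusSet G C (k ^ 2 + k + 3) (AseqsOf G C (k ^ 2 + k + 3) L sv e h) ∧
      BsetOf sv e h ⊆ plusSet G C (k ^ 2 + k + 3) (BseqsOf G C (k ^ 2 + k + 3) L sv e h) :=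
  subset_plus_minus_general G sv tv C hpart L hL e henum
end

section
/- Let k,c≥1, let (G,s_1,t_1,…,s_k,t_k) be a problem instance where G has a clique-partition (C_1,…,C_c), and let H be the auxiliary digraph as defined. Let (Y_1,D_1),…,(Y_n,D_n) be the vertices, in order, of a directed path in H, and let Y=Y_1∪…∪Y_n. If (e,i)∈Y, 1≤h≤n, and exactly one end of e belongs to D_h, then (e,i)∈Y_h. -/
open scoped Classical

/-!
Along a path of `H` the sets `D` only grow. Hence if a coloured edge has exactly one end in two
of the `D`'s, it has exactly one end in every `D` in between. Across a single step `(Y, D) → (Y', D')`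
of `H` the only coloured edges that change are the two through the new middle vertex, which lies
in `D' \ D`; such an edge cannot have exactly one end both in `D` and in `D'`, since its other end
would have to lie in `D ⊆ D'`. So membership of the edge in `Y` is constant on the stretch of the
path between a vertex whose `Y` contains it and a vertex whose `D` it crosses.
-/

theorem xor_mem_of_subset_of_subset {V : Type} {D₁ D₂ D₃ : Set V} {u v : V}
    (h₁₂ : D₁ ⊆ D₂) (h₂₃ : D₂ ⊆ D₃) (h₁ : Xor (u ∈ D₁) (v ∈ D₁))
    (h₃ : Xor (u ∈ D₃) (v ∈ D₃)) : Xor (u ∈ D₂) (v ∈ D₂) := by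
  have := @h₁₂ u; have := @h₁₂ v; have := @h₂₃ u; have := @h₂₃ v
  simp only [xor_def] at *
  tauto

namespace HAdj

variable {V : Type} {k c : ℕ} {G : Dgraph V} {sv tv : Fin k → V} {C : Fin c → Set V}
  {w r s t : ℕ} {x y : Set ((V × V) × Fin k) × Set V}

theorem snd_subset (hxy : HAdj G sv tv C w r s t x y) : x.2 ⊆ y.2 := hxy.2.2.2.1

theorem exists_end_mem_diff (hxy : HAdj G sv tv C w r s t x y) {p : (V × V) × Fin k}
    (hp : p ∈ symmDiff x.1 y.1) : p.1.1 ∈ y.2 \ x.2 ∨ p.1.2 ∈ y.2 \ x.2 := by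
  obtain ⟨-, -, -, -, a, b, -, hab, hmid, -, hm⟩ := hxy
  rw [hab] at hp
  rcases hp with rfl | rfl
  · exact Or.inr hm
  · exact Or.inl (hmid ▸ hm)

theorem mem_fst_iff (hxy : HAdj G sv tv C w r s t x y) {p : (V × V) × Fin k}
    (hx : Xor (p.1.1 ∈ x.2) (p.1.2 ∈ x.2)) (hy : Xor (p.1.1 ∈ y.2) (p.1.2 ∈ y.2)) :
    p ∈ x.1 ↔ p ∈ y.1 := by
  by_contra hne
  have hp : p ∈ symmDiff x.1 y.1 := by
    rw [Set.mem_symmDiff]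
    tauto
  have hsub := hxy.snd_subset
  have := @hsub p.1.1; have := @hsub p.1.2
  simp only [xor_def] at hx hy
  rcases hxy.exists_end_mem_diff hp with h | h <;> simp only [Set.mem_sdiff] at h <;> tauto

theorem mem_fst_of_isChain {l : List (Set ((V × V) × Fin k) × Set V)}
    (hl : l.IsChain (HAdj G sv tv C w r s t)) (hV : ∀ x ∈ l, HVert G sv tv C w r s t x)
    {p : (V × V) × Fin k} (hx : x ∈ l) (hy : y ∈ l) (hpy : p ∈ y.1)
    (hsep : Xor (p.1.1 ∈ x.2) (p.1.2 ∈ x.2)) : p ∈ x.1 := by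
  induction l generalizing x y with
  | nil => simp at hx
  | cons a l ih =>
    rcases l with _ | ⟨b, l⟩
    · simp only [List.mem_singleton] at hx hy
      exact hx ▸ hy ▸ hpy
    have hab : HAdj G sv tv C w r s t a b := (List.isChain_cons_cons.1 hl).1
    have hl' := hl.tail
    have hV' : ∀ z ∈ b :: l, HVert G sv tv C w r s t z := fun z hz => hV z (.tail a hz)
    have hbz : ∀ z ∈ b :: l, b.2 ⊆ z.2 := by
      have hmono : (b :: l).Pairwise fun x y => x.2 ⊆ y.2 :=
        List.isChain_iff_pairwise.1 (hl'.imp fun _ _ h => h.snd_subset)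
      simpa [Set.Subset.rfl] using (List.pairwise_cons.1 hmono).1
    rcases List.mem_cons.1 hx with rfl | hx' <;> rcases List.mem_cons.1 hy with rfl | hy'
    · exact hpy
    · have hb : Xor (p.1.1 ∈ b.2) (p.1.2 ∈ b.2) :=
        xor_mem_of_subset_of_subset hab.snd_subset (hbz y hy') hsep ((hV' y hy').2.2 p hpy)
      exact (hab.mem_fst_iff hsep hb).2 (ih hl' hV' List.mem_cons_self hy' hpy hb)
    · have ha : Xor (p.1.1 ∈ y.2) (p.1.2 ∈ y.2) := (hV y List.mem_cons_self).2.2 p hpy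
      have hb : Xor (p.1.1 ∈ b.2) (p.1.2 ∈ b.2) :=
        xor_mem_of_subset_of_subset hab.snd_subset (hbz x hx') ha hsep
      exact ih hl' hV' hx' List.mem_cons_self ((hab.mem_fst_iff ha hb).1 hpy) hsep
    · exact ih hl' hV' hx' hy' hpy hsep

end HAdj

theorem aux_path_edge_membership_general {V : Type} {k c : ℕ}
    (G : Dgraph V) (sv tv : Fin k → V)
    (C : Fin c → Set V)
    (P : Dpath (auxH G sv tv C (wOf k c) (rOf k c) (sOf k) (tOf k c)))
    (hHV : ∀ x ∈ P.support, HVert G sv tv C (wOf k c) (rOf k c) (sOf k) (tOf k c) x) :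
    ∀ p ∈ ⋃ x ∈ P.support, x.1, ∀ x ∈ P.support,
      Xor' (p.1.1 ∈ x.2) (p.1.2 ∈ x.2) → p ∈ x.1 := by
  intro p hp x hx hsep
  obtain ⟨y, hy, hpy⟩ := Set.mem_iUnion₂.1 hp
  exact HAdj.mem_fst_of_isChain P.chain hHV hx hy hpy hsep

/-- Step (2) of the proof of Theorem 5.1: if `(e,i) ∈ Y = Y 1 ∪ ⋯ ∪ Y n` and exactly one
end of `e` lies in `D h`, then `(e,i) ∈ Y h`. -/
theorem aux_path_edge_membership {V : Type} [Fintype V] {k c : ℕ} (hk : 1 ≤ k)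
    (hc : 1 ≤ c) (G : Dgraph V) (sv tv : Fin k → V) (hinst : IsInstance sv tv)
    (C : Fin c → Set V) (hpart : G.IsCliquePartition C)
    (P : Dpath (auxH G sv tv C (wOf k c) (rOf k c) (sOf k) (tOf k c)))
    (hHV : ∀ x ∈ P.support, HVert G sv tv C (wOf k c) (rOf k c) (sOf k) (tOf k c) x) :
    ∀ p ∈ ⋃ x ∈ P.support, x.1, ∀ x ∈ P.support,
      Xor' (p.1.1 ∈ x.2) (p.1.2 ∈ x.2) → p ∈ x.1 :=
  aux_path_edge_membership_general G sv tv C P hHV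
end

section
/- Let k,c≥1, let (G,s_1,t_1,…,s_k,t_k) be a problem instance where G has a clique-partition (C_1,…,C_c), and let H, S_0, T_0 be as defined. Let (Y_1,D_1),…,(Y_n,D_n) be the vertices, in order, of a directed path in H with (Y_1,D_1)∈S_0 and (Y_n,D_n)∈T_0, and let Y=Y_1∪…∪Y_n. Then every vertex of G incident with exactly one coloured edge in Y belongs to {s_1,…,s_k,t_1,…,t_k}. -/
/-! In a step `(Y,D) → (Y',D')` of `H` the swapped coloured edges form a two-edge path whose
middle vertex enters `D`. If `v` is an end of the coloured edge `e` and of no other member of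
`Y`, then whenever `e` enters or leaves along the path, that middle vertex is the other end
of `e`. As `D` only grows, `e` changes status at most once, so it lies in `Y 1` or in `Y n`.
Say `v` is the tail of `e` and `e ∉ Y 1`: then `e ∈ Y n`, so its head is some `t i`, and the
edge swapped in together with `e` has tail `t i`, which no member of `ℰ` may have. The case
of a head is symmetric, with `S 0` and `T 0` exchanging roles. -/

open scoped Classical

namespace List.IsChain

variable {α β : Type*} {R : α → α → Prop} {Q : α → Prop} {l : List α}

theorem exists_rel_not_iff (hl : l ≠ []) (hc : l.IsChain R)
    (h : ¬(Q (l.head hl) ↔ Q (l.getLast hl))) : ∃ a b, R a b ∧ ¬(Q a ↔ Q b) := by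
  by_contra! hconst
  exact h (hc.induction (fun x => Q (l.head hl) ↔ Q x) l
    (fun x y hxy hx => hx.trans (hconst x y hxy)) (fun _ => Iff.rfl) _ (getLast_mem hl))

/-- `Q` changes at most once along the chain, since each change puts `u` into the growing `D`. -/
theorem head_or_getLast_of_mem {D : α → Set β} {u : β} (hl : l ≠ []) (hc : l.IsChain R)
    (hD : ∀ a b, R a b → D a ⊆ D b) (hflip : ∀ a b, R a b → ¬(Q a ↔ Q b) → u ∈ D b \ D a)
    {x : α} (hx : x ∈ l) (hQx : Q x) : Q (l.head hl) ∨ Q (l.getLast hl) := by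
  by_contra! hends
  have hfwd := hc.induction (fun a => ¬Q a ∨ u ∈ D a) l
    (fun a b hab ha => by
      by_cases hQ : Q a ↔ Q b
      · exact ha.imp (mt hQ.2) (hD a b hab ·)
      · exact Or.inr (hflip a b hab hQ).1)
    (fun _ => Or.inl hends.1) x hx
  have hbwd := hc.backwards_induction (fun a => ¬Q a ∨ u ∉ D a) l
    (fun a b hab hb => by
      by_cases hQ : Q a ↔ Q b
      · exact hb.imp (mt hQ.1) (mt (hD a b hab ·))
      · exact Or.inr (hflip a b hab hQ).2)
    (fun _ => Or.inl hends.2) x hx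
  tauto

end List.IsChain

section AuxiliaryDigraph

variable {V : Type} {G : Dgraph V} {k c : ℕ} {sv tv : Fin k → V} {C : Fin c → Set V}
  {w r s t : ℕ} {x y : Set ((V × V) × Fin k) × Set V} {e : (V × V) × Fin k}

theorem HAdj.head_mem_diff_of_unique_tail (h : HAdj G sv tv C w r s t x y)
    (he : e ∈ symmDiff x.1 y.1) (hu : ∀ f ∈ symmDiff x.1 y.1, f.1.2 = e.1.1 → f = e) :
    e.1.2 ∈ y.2 \ x.2 ∧ ∃ f ∈ symmDiff x.1 y.1, f.1.1 = e.1.2 := by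
  obtain ⟨-, -, -, -, p, q, hpq, hsd, hmid, -, hm⟩ := h
  rw [hsd] at he hu ⊢
  rcases he with rfl | rfl
  · exact ⟨hm, q, Or.inr rfl, hmid.symm⟩
  · exact absurd (hu p (Or.inl rfl) hmid) hpq

theorem HAdj.tail_mem_diff_of_unique_head (h : HAdj G sv tv C w r s t x y)
    (he : e ∈ symmDiff x.1 y.1) (hu : ∀ f ∈ symmDiff x.1 y.1, f.1.1 = e.1.2 → f = e) :
    e.1.1 ∈ y.2 \ x.2 ∧ ∃ f ∈ symmDiff x.1 y.1, f.1.2 = e.1.1 := by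
  obtain ⟨-, -, -, -, p, q, hpq, hsd, hmid, -, hm⟩ := h
  rw [hsd] at he hu ⊢
  rcases he with rfl | rfl
  · exact absurd (hu q (Or.inr rfl) hmid.symm).symm hpq
  · exact ⟨hmid ▸ hm, p, Or.inl rfl, hmid⟩

namespace Dpath

variable (P : Dpath (auxH G sv tv C w r s t))

theorem ends_not_mem_range_of_mem_biUnion (hP : HVert G sv tv C w r s t P.first)
    {f : (V × V) × Fin k} (hf : f ∈ ⋃ x ∈ P.support, x.1) :
    f.1.2 ∉ Set.range sv ∧ f.1.1 ∉ Set.range tv := by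
  obtain ⟨x, hx, hfx⟩ := Set.mem_iUnion₂.mp hf
  have hvert := P.chain.induction (HVert G sv tv C w r s t) P.verts
    (fun _ _ hxy _ => hxy.2.2.1) (fun _ => hP) x hx
  exact hvert.1.2.2.2.2.1 f hfx

theorem isChain_hAdj_symmDiff_subset : P.verts.IsChain fun x y =>
    HAdj G sv tv C w r s t x y ∧ symmDiff x.1 y.1 ⊆ ⋃ z ∈ P.support, z.1 :=
  P.chain.imp_of_mem_imp fun _ _ hx hy hxy => ⟨hxy, Set.symmDiff_subset_union.trans
    (Set.union_subset (Set.subset_biUnion_of_mem hx) (Set.subset_biUnion_of_mem hy))⟩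

variable {P}

theorem tail_mem_range_of_unique_tail (hS : P.first ∈ S0set G sv tv C w r s t)
    (hT : P.last ∈ T0set G sv tv C w r s t) (he : e ∈ ⋃ x ∈ P.support, x.1)
    (hu : ∀ f ∈ ⋃ x ∈ P.support, x.1, f.1.2 = e.1.1 → f = e) : e.1.1 ∈ Set.range sv := by
  have hstep : ∀ x y, HAdj G sv tv C w r s t x y ∧ symmDiff x.1 y.1 ⊆ ⋃ z ∈ P.support, z.1 →
      ¬(e ∈ x.1 ↔ e ∈ y.1) → e.1.2 ∈ y.2 \ x.2 ∧ ∃ f ∈ symmDiff x.1 y.1, f.1.1 = e.1.2 :=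
    fun x y hxy hflip => hxy.1.head_mem_diff_of_unique_tail
      (by rw [Set.mem_symmDiff]; tauto) fun f hf hfe => hu f (hxy.2 hf) hfe
  by_cases h0 : e ∈ P.first.1
  · exact hS.2.2 e h0
  obtain ⟨x, hxP, hex⟩ := Set.mem_iUnion₂.mp he
  have hlast : e ∈ P.last.1 := (P.isChain_hAdj_symmDiff_subset.head_or_getLast_of_mem
    (Q := fun x => e ∈ x.1) P.ne (fun _ _ hxy => hxy.1.2.2.2.1)
    (fun x y hxy hflip => (hstep x y hxy hflip).1) hxP hex).resolve_left h0
  obtain ⟨x, y, hxy, hflip⟩ := P.isChain_hAdj_symmDiff_subset.exists_rel_not_iff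
    (Q := fun x => e ∈ x.1) P.ne (by tauto)
  obtain ⟨-, f, hf, hfe⟩ := hstep x y hxy hflip
  exact ((P.ends_not_mem_range_of_mem_biUnion hS.1 (hxy.2 hf)).2 (hfe ▸ hT.2.2 e hlast)).elim

theorem head_mem_range_of_unique_head (hS : P.first ∈ S0set G sv tv C w r s t)
    (hT : P.last ∈ T0set G sv tv C w r s t) (he : e ∈ ⋃ x ∈ P.support, x.1)
    (hu : ∀ f ∈ ⋃ x ∈ P.support, x.1, f.1.1 = e.1.2 → f = e) : e.1.2 ∈ Set.range tv := by
  have hstep : ∀ x y, HAdj G sv tv C w r s t x y ∧ symmDiff x.1 y.1 ⊆ ⋃ z ∈ P.support, z.1 →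
      ¬(e ∈ x.1 ↔ e ∈ y.1) → e.1.1 ∈ y.2 \ x.2 ∧ ∃ f ∈ symmDiff x.1 y.1, f.1.2 = e.1.1 :=
    fun x y hxy hflip => hxy.1.tail_mem_diff_of_unique_head
      (by rw [Set.mem_symmDiff]; tauto) fun f hf hfe => hu f (hxy.2 hf) hfe
  by_cases hlast : e ∈ P.last.1
  · exact hT.2.2 e hlast
  obtain ⟨x, hxP, hex⟩ := Set.mem_iUnion₂.mp he
  have h0 : e ∈ P.first.1 := (P.isChain_hAdj_symmDiff_subset.head_or_getLast_of_mem
    (Q := fun x => e ∈ x.1) P.ne (fun _ _ hxy => hxy.1.2.2.2.1)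
    (fun x y hxy hflip => (hstep x y hxy hflip).1) hxP hex).resolve_right hlast
  obtain ⟨x, y, hxy, hflip⟩ := P.isChain_hAdj_symmDiff_subset.exists_rel_not_iff
    (Q := fun x => e ∈ x.1) P.ne (by tauto)
  obtain ⟨-, f, hf, hfe⟩ := hstep x y hxy hflip
  exact ((P.ends_not_mem_range_of_mem_biUnion hS.1 (hxy.2 hf)).1 (hfe ▸ hS.2.2 e h0)).elim

end Dpath

end AuxiliaryDigraph

theorem aux_path_degree_one_general {V : Type} {k c : ℕ}
    (G : Dgraph V) (sv tv : Fin k → V)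
    (C : Fin c → Set V)
    (P : Dpath (auxH G sv tv C (wOf k c) (rOf k c) (sOf k) (tOf k c)))
    (hS : P.first ∈ S0set G sv tv C (wOf k c) (rOf k c) (sOf k) (tOf k c))
    (hT : P.last ∈ T0set G sv tv C (wOf k c) (rOf k c) (sOf k) (tOf k c)) :
    ∀ v : V,
      (∃! p : (V × V) × Fin k,
        p ∈ (⋃ x ∈ P.support, x.1) ∧ (v = p.1.1 ∨ v = p.1.2)) →
      v ∈ Set.range sv ∪ Set.range tv := by
  rintro v ⟨e, ⟨he, hve⟩, hu⟩
  rcases hve with rfl | rfl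
  · exact Or.inl (Dpath.tail_mem_range_of_unique_tail hS hT he
      fun f hf hfe => hu f ⟨hf, Or.inr hfe.symm⟩)
  · exact Or.inr (Dpath.head_mem_range_of_unique_head hS hT he
      fun f hf hfe => hu f ⟨hf, Or.inl hfe.symm⟩)

/-- Step (4) of the proof of Theorem 5.1: along a directed path in `H` from `S 0` to
`T 0`, every vertex of `G` incident with exactly one coloured edge of `Y = Y 1 ∪ ⋯ ∪ Y n`
belongs to `{s 1,…,s k,t 1,…,t k}`. -/
theorem aux_path_degree_one {V : Type} [Fintype V] {k c : ℕ} (hk : 1 ≤ k) (hc : 1 ≤ c)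
    (G : Dgraph V) (sv tv : Fin k → V) (hinst : IsInstance sv tv)
    (C : Fin c → Set V) (hpart : G.IsCliquePartition C)
    (P : Dpath (auxH G sv tv C (wOf k c) (rOf k c) (sOf k) (tOf k c)))
    (hS : P.first ∈ S0set G sv tv C (wOf k c) (rOf k c) (sOf k) (tOf k c))
    (hT : P.last ∈ T0set G sv tv C (wOf k c) (rOf k c) (sOf k) (tOf k c)) :
    ∀ v : V,
      (∃! p : (V × V) × Fin k,
        p ∈ (⋃ x ∈ P.support, x.1) ∧ (v = p.1.1 ∨ v = p.1.2)) →
      v ∈ Set.range sv ∪ Set.range tv :=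
  aux_path_degree_one_general G sv tv C P hS hT
end
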